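/- arXiv:math/0505445 — 10 statements merged into one kernel-verified Lean document; each statement's English description precedes it below -/
import Mathlib

section
/- If every principal right ideal of a ring R is small injective as a right R-module, then J(R) = 0. -/
/-!
An element `x` of the Jacobson radical generates a small right ideal `xR`, since `1 - xr` is a
unit for every `r`. Small injectivity of `xR` extends the identity of `xR` to a map `R → xR`, so
`x = g(1) x = x t x` for some `t`. Then `x (1 - t x) = 0` with `1 - t x` a unit, hence `x = 0`.
-/

/-- A right ideal `I` of `R` (viewed as a submodule of `R` over `Rᵐᵒᵖ`) is small if
`I + K ≠ R` for every proper right ideal `K`. -/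
def IsSmallRightIdeal {R : Type*} [Ring R] (I : Submodule Rᵐᵒᵖ R) : Prop :=
  ∀ K : Submodule Rᵐᵒᵖ R, I ⊔ K = ⊤ → K = ⊤

/-- A right `R`-module `M` is small injective if every `R`-homomorphism from a small right
ideal of `R` to `M` extends to a homomorphism `R → M`. -/
def SmallInjective (R : Type*) [Ring R] (M : Type*) [AddCommGroup M] [Module Rᵐᵒᵖ M] : Prop :=
  ∀ I : Submodule Rᵐᵒᵖ R, IsSmallRightIdeal I → ∀ f : I →ₗ[Rᵐᵒᵖ] M,
    ∃ g : R →ₗ[Rᵐᵒᵖ] M, ∀ x : I, g x = f x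

section

open MulOpposite Submodule

variable {R : Type*} [Ring R]

namespace Ideal

theorem exists_mul_one_add_eq_one_of_mem_jacobson_bot {a : R}
    (ha : a ∈ (⊥ : Ideal R).jacobson) : ∃ z : R, z * (1 + a) = 1 := by
  obtain ⟨z, hz⟩ := mem_jacobson_iff.mp ha 1
  rw [mem_bot, mul_one, sub_eq_zero] at hz
  exact ⟨z, by rw [mul_add, mul_one, add_comm, hz]⟩

-- The left inverse `z = 1 - z a` of `1 + a` is itself left invertible, hence a two-sided inverse.
theorem isUnit_one_add_of_mem_jacobson_bot {a : R}
    (ha : a ∈ (⊥ : Ideal R).jacobson) : IsUnit (1 + a) := by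
  obtain ⟨z, hz⟩ := exists_mul_one_add_eq_one_of_mem_jacobson_bot ha
  obtain ⟨w, hw⟩ := exists_mul_one_add_eq_one_of_mem_jacobson_bot
    (neg_mem (mul_mem_left _ z ha))
  have hz' : 1 + -(z * a) = z := by rw [← hz]; noncomm_ring
  rw [hz'] at hw
  have hw' : w = 1 + a := calc
    w = w * (z * (1 + a)) := by rw [hz, mul_one]
    _ = 1 + a := by rw [← mul_assoc, hw, one_mul]
  exact isUnit_iff_exists.mpr ⟨z, hw' ▸ hw, hz⟩

end Ideal

theorem Submodule.eq_top_of_isUnit_mem {K : Submodule Rᵐᵒᵖ R} {b : R} (hb : b ∈ K)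
    (hu : IsUnit b) : K = ⊤ := by
  obtain ⟨u, rfl⟩ := hu
  refine eq_top_iff.mpr fun z _ ↦ ?_
  have hz : z = op (↑u⁻¹ * z) • (u : R) := by
    rw [smul_eq_mul_unop, unop_op, Units.mul_inv_cancel_left]
  exact hz ▸ K.smul_mem _ hb

theorem isSmallRightIdeal_of_le_jacobson_bot {I : Submodule Rᵐᵒᵖ R}
    (hI : ∀ x ∈ I, x ∈ (⊥ : Ideal R).jacobson) : IsSmallRightIdeal I := by
  intro K hK
  obtain ⟨a, ha, b, hb, hab⟩ := mem_sup.mp (hK ▸ mem_top : (1 : R) ∈ I ⊔ K)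
  have hb' : b = 1 + -a := by rw [← hab]; abel
  exact eq_top_of_isUnit_mem hb
    (hb' ▸ Ideal.isUnit_one_add_of_mem_jacobson_bot (neg_mem (hI a ha)))

theorem isSmallRightIdeal_span_singleton_of_mem_jacobson_bot {x : R}
    (hx : x ∈ (⊥ : Ideal R).jacobson) : IsSmallRightIdeal (span Rᵐᵒᵖ {x}) := by
  refine isSmallRightIdeal_of_le_jacobson_bot fun y hy ↦ ?_
  obtain ⟨r, rfl⟩ := mem_span_singleton.mp hy
  exact Ideal.mul_mem_right r.unop _ hx

theorem exists_mul_mul_eq_self_of_smallInjective {x : R}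
    (hsmall : IsSmallRightIdeal (span Rᵐᵒᵖ {x}))
    (hinj : SmallInjective R (span Rᵐᵒᵖ {x})) : ∃ t : R, x * t * x = x := by
  obtain ⟨g, hg⟩ := hinj _ hsmall LinearMap.id
  obtain ⟨t, ht⟩ := mem_span_singleton.mp (g 1).2
  refine ⟨t.unop, ?_⟩
  have hgx : g x = op x • g 1 := by
    rw [← g.map_smul, smul_eq_mul_unop, unop_op, one_mul]
  calc x * t.unop * x = (g x : R) := by rw [hgx, coe_smul, ← ht]; rfl
    _ = x := congrArg Subtype.val (hg ⟨x, mem_span_singleton_self x⟩)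

theorem eq_zero_of_mul_mul_eq_self_of_mem_jacobson_bot {x t : R}
    (hx : x ∈ (⊥ : Ideal R).jacobson) (hxtx : x * t * x = x) : x = 0 := by
  have hu : IsUnit (1 + -(t * x)) :=
    Ideal.isUnit_one_add_of_mem_jacobson_bot (neg_mem (Ideal.mul_mem_left _ t hx))
  refine hu.mul_left_eq_zero.mp ?_
  rw [mul_add, mul_one, mul_neg, ← mul_assoc, hxtx, add_neg_cancel]

end

/-- If every principal right ideal of `R` is small injective as a right `R`-module,
then `J(R) = 0`. -/
theorem stmt_2 {R : Type*} [Ring R]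
    (h : ∀ x : R, SmallInjective R (Submodule.span Rᵐᵒᵖ ({x} : Set R))) :
    (⊥ : Ideal R).jacobson = ⊥ := by
  refine eq_bot_iff.mpr fun x hx ↦ (Submodule.mem_bot R).mpr ?_
  obtain ⟨t, ht⟩ := exists_mul_mul_eq_self_of_smallInjective
    (isSmallRightIdeal_span_singleton_of_mem_jacobson_bot hx) (h x)
  exact eq_zero_of_mul_mul_eq_self_of_mem_jacobson_bot hx ht
end

section
/- A direct product of rings R = ∏_{i∈I} R_i is right small injective if and only if each R_i is right small injective. -/
lemma single_mul_right {ι : Type*} [DecidableEq ι] {R : ι → Type*} [∀ i, Ring (R i)]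
    (i : ι) (a : R i) (r : ∀ j, R j) : Pi.single i a * r = Pi.single i (a * r i) := by
  funext j
  by_cases h : j = i
  · subst h; simp
  · simp [Pi.single_apply, h]

lemma aux_fwd {ι : Type*} [DecidableEq ι] (R : ι → Type*) [∀ i, Ring (R i)]
    (h : SmallInjective (∀ i, R i) (∀ i, R i)) (i : ι) : SmallInjective (R i) (R i) := by
  intro I hI f
  -- the corresponding ideal in the product ring
  let T : Submodule (∀ j, R j)ᵐᵒᵖ (∀ j, R j) :=
    { carrier := {x | x i ∈ I ∧ ∀ j, j ≠ i → x j = 0}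
      zero_mem' := ⟨I.zero_mem, fun _ _ => rfl⟩
      add_mem' := by
        rintro x y ⟨hx1, hx2⟩ ⟨hy1, hy2⟩
        exact ⟨I.add_mem hx1 hy1, fun j hj => by
          show x j + y j = 0
          rw [hx2 j hj, hy2 j hj, add_zero]⟩
      smul_mem' := by
        rintro c x ⟨hx1, hx2⟩
        refine ⟨?_, ?_⟩
        · show (x * c.unop) i ∈ I
          exact I.smul_mem (MulOpposite.op (c.unop i)) hx1
        · intro j hj
          show (x * c.unop) j = 0
          rw [Pi.mul_apply, hx2 j hj, zero_mul] }
  have hTmem : ∀ x : ∀ j, R j, x ∈ T ↔ (x i ∈ I ∧ ∀ j, j ≠ i → x j = 0) := fun _ => Iff.rfl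
  have hT : IsSmallRightIdeal T := by
    intro K hK
    -- the projection of K onto the i-th coordinate
    let Ki : Submodule (R i)ᵐᵒᵖ (R i) :=
      { carrier := {a | ∃ x ∈ K, x i = a}
        zero_mem' := ⟨0, K.zero_mem, rfl⟩
        add_mem' := by
          rintro a b ⟨x, hx, rfl⟩ ⟨y, hy, rfl⟩
          exact ⟨x + y, K.add_mem hx hy, rfl⟩
        smul_mem' := by
          rintro c a ⟨x, hx, rfl⟩
          refine ⟨x * Pi.single i c.unop,
            K.smul_mem (MulOpposite.op (Pi.single i c.unop)) hx, ?_⟩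
          show x i * (Pi.single i c.unop) i = _
          rw [Pi.single_eq_same]
          rfl }
    have hKi : I ⊔ Ki = ⊤ := by
      rw [eq_top_iff]
      intro a _
      have hmem : (Pi.single i a : ∀ j, R j) ∈ T ⊔ K := hK ▸ Submodule.mem_top
      rcases Submodule.mem_sup.mp hmem with ⟨t, ht, k, hk, htk⟩
      have ha : a = t i + k i := by
        have := congrFun htk i
        simpa using this.symm
      rw [ha]
      exact Submodule.add_mem _ (Submodule.mem_sup_left ht.1)
        (Submodule.mem_sup_right ⟨k, hk, rfl⟩)
    have hKitop : Ki = ⊤ := hI Ki hKi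
    rw [eq_top_iff]
    intro y _
    have hy : y ∈ T ⊔ K := hK ▸ Submodule.mem_top
    rcases Submodule.mem_sup.mp hy with ⟨t, ht, k, hk, rfl⟩
    have hti : t i ∈ Ki := hKitop ▸ Submodule.mem_top
    rcases hti with ⟨k2, hk2, hk2i⟩
    have ht' : t = k2 * Pi.single i 1 := by
      funext j
      by_cases hj : j = i
      · subst hj; simp [hk2i]
      · simp [Pi.single_apply, hj, ht.2 j hj]
    rw [ht']
    exact K.add_mem (K.smul_mem (MulOpposite.op (Pi.single i 1)) hk2) hk
  -- the lifted map
  let F : T →ₗ[(∀ j, R j)ᵐᵒᵖ] (∀ j, R j) :=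
    { toFun := fun x => Pi.single i (f ⟨x.1 i, x.2.1⟩)
      map_add' := by
        rintro x y
        have h0 : (⟨(x + y).1 i, (x + y).2.1⟩ : I) = ⟨x.1 i, x.2.1⟩ + ⟨y.1 i, y.2.1⟩ := rfl
        show Pi.single i (f ⟨(x + y).1 i, (x + y).2.1⟩)
            = Pi.single i (f ⟨x.1 i, x.2.1⟩) + Pi.single i (f ⟨y.1 i, y.2.1⟩)
        rw [h0, map_add, Pi.single_add]
      map_smul' := by
        rintro c x
        have h1 : (⟨(c • x).1 i, (c • x).2.1⟩ : I)
            = (MulOpposite.op (c.unop i)) • ⟨x.1 i, x.2.1⟩ := rfl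
        show Pi.single i (f ⟨(c • x).1 i, (c • x).2.1⟩)
            = c • Pi.single i (f ⟨x.1 i, x.2.1⟩)
        rw [h1, map_smul]
        show Pi.single i (f ⟨x.1 i, x.2.1⟩ * c.unop i) = Pi.single i (f ⟨x.1 i, x.2.1⟩) * c.unop
        rw [single_mul_right] }
  obtain ⟨g, hg⟩ := h T hT F
  refine ⟨{ toFun := fun a => g (Pi.single i a) i
            map_add' := ?_
            map_smul' := ?_ }, ?_⟩
  · intro a b
    show g (Pi.single i (a + b)) i = g (Pi.single i a) i + g (Pi.single i b) i
    rw [Pi.single_add, map_add]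
    rfl
  · intro c a
    show g (Pi.single i (a * c.unop)) i = g (Pi.single i a) i * c.unop
    rw [show Pi.single i (a * c.unop) = Pi.single i a * Pi.single i c.unop by
      rw [single_mul_right, Pi.single_eq_same]]
    rw [show (Pi.single i a * Pi.single i c.unop : ∀ j, R j)
        = (MulOpposite.op (Pi.single i c.unop)) • Pi.single i a from rfl, map_smul]
    show (g (Pi.single i a) * Pi.single i c.unop) i = _
    rw [Pi.mul_apply, Pi.single_eq_same]
  · intro x
    have hmem : (Pi.single i (x : R i) : ∀ j, R j) ∈ T :=
      ⟨by simpa using x.2, fun j hj => Pi.single_eq_of_ne hj _⟩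
    have hx := hg ⟨_, hmem⟩
    show g (Pi.single i (x : R i)) i = f x
    rw [hx]
    show Pi.single i (f ⟨(Pi.single i (x : R i) : ∀ j, R j) i, hmem.1⟩) i = f x
    rw [Pi.single_eq_same]
    congr 1
    exact Subtype.ext (Pi.single_eq_same ..)

lemma aux_bwd {ι : Type*} [DecidableEq ι] (R : ι → Type*) [∀ i, Ring (R i)]
    (h : ∀ i, SmallInjective (R i) (R i)) : SmallInjective (∀ i, R i) (∀ i, R i) := by
  intro I hI f
  -- the projections of I
  let J : ∀ i, Submodule (R i)ᵐᵒᵖ (R i) := fun i =>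
    { carrier := {a | ∃ x ∈ I, x i = a}
      zero_mem' := ⟨0, I.zero_mem, rfl⟩
      add_mem' := by
        rintro a b ⟨x, hx, rfl⟩ ⟨y, hy, rfl⟩
        exact ⟨x + y, I.add_mem hx hy, rfl⟩
      smul_mem' := by
        rintro c a ⟨x, hx, rfl⟩
        refine ⟨x * Pi.single i c.unop, I.smul_mem (MulOpposite.op (Pi.single i c.unop)) hx, ?_⟩
        show x i * (Pi.single i c.unop) i = _
        rw [Pi.single_eq_same]
        rfl }
  have hJ : ∀ i, IsSmallRightIdeal (J i) := by
    intro i K hK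
    let Kt : Submodule (∀ j, R j)ᵐᵒᵖ (∀ j, R j) :=
      { carrier := {x | x i ∈ K}
        zero_mem' := K.zero_mem
        add_mem' := fun hx hy => K.add_mem hx hy
        smul_mem' := fun c x hx => K.smul_mem (MulOpposite.op (c.unop i)) hx }
    have hKt : I ⊔ Kt = ⊤ := by
      rw [eq_top_iff]
      intro y _
      have hyi : y i ∈ J i ⊔ K := hK ▸ Submodule.mem_top
      rcases Submodule.mem_sup.mp hyi with ⟨a, ⟨x, hx, hxa⟩, k, hk, hak⟩
      have hyx : y = x + (y - x) := by abel
      rw [hyx]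
      refine Submodule.add_mem _ (Submodule.mem_sup_left hx) (Submodule.mem_sup_right ?_)
      show (y - x) i ∈ K
      have : (y - x) i = k := by
        rw [Pi.sub_apply, hxa, ← hak]
        abel
      rw [this]
      exact hk
    have hKttop := hI Kt hKt
    rw [eq_top_iff]
    intro b _
    have hb : (Pi.single i b : ∀ j, R j) ∈ Kt := hKttop ▸ Submodule.mem_top
    have hb' : (Pi.single i b : ∀ j, R j) i ∈ K := hb
    rwa [Pi.single_eq_same] at hb'
  -- key: the i-th coordinate of f x depends only on the i-th coordinate of x
  have key : ∀ (i : ι) (x y : I), (x : ∀ j, R j) i = (y : ∀ j, R j) i → f x i = f y i := by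
    intro i x y hxy
    have h1 : (MulOpposite.op (Pi.single i (1 : R i))) • x
        = (MulOpposite.op (Pi.single i (1 : R i))) • y := by
      apply Subtype.ext
      show (x : ∀ j, R j) * Pi.single i 1 = (y : ∀ j, R j) * Pi.single i 1
      funext j
      by_cases hj : j = i
      · subst hj; simp [hxy]
      · simp [Pi.single_eq_of_ne hj]
    have h2 := congrArg f h1
    rw [map_smul, map_smul] at h2
    have h3 : ((f x * Pi.single i 1 : ∀ j, R j)) i = ((f y * Pi.single i 1 : ∀ j, R j)) i := congrFun h2 i
    simpa using h3
  -- witnesses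
  have exw : ∀ (i : ι) (a : J i), ∃ x, x ∈ I ∧ x i = (a : R i) := fun i a => a.2
  let w : ∀ i : ι, J i → I := fun i a => ⟨(exw i a).choose, (exw i a).choose_spec.1⟩
  have hw : ∀ (i : ι) (a : J i), (w i a : ∀ j, R j) i = (a : R i) :=
    fun i a => (exw i a).choose_spec.2
  -- the coordinate maps
  let F : ∀ i, (J i) →ₗ[(R i)ᵐᵒᵖ] R i := fun i =>
    { toFun := fun a => f (w i a) i
      map_add' := by
        intro a b
        show f (w i (a + b)) i = f (w i a) i + f (w i b) i
        have h1 : f (w i (a + b)) i = f (w i a + w i b) i := by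
          apply key
          show (w i (a + b) : ∀ j, R j) i = ((w i a : ∀ j, R j) + (w i b : ∀ j, R j)) i
          rw [Pi.add_apply, hw, hw, hw]
          rfl
        rw [h1, map_add, Pi.add_apply]
      map_smul' := by
        intro c a
        show f (w i (c • a)) i = f (w i a) i * c.unop
        have h1 : f (w i (c • a)) i
            = f ((MulOpposite.op (Pi.single i c.unop)) • w i a) i := by
          apply key
          show (w i (c • a) : ∀ j, R j) i = ((w i a : ∀ j, R j) * Pi.single i c.unop) i
          rw [hw, Pi.mul_apply, Pi.single_eq_same, hw]
          rfl
        rw [h1, map_smul]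
        show ((f (w i a)) * Pi.single i c.unop) i = _
        rw [Pi.mul_apply, Pi.single_eq_same] }
  choose g hg using fun i => h i (J i) (hJ i) (F i)
  refine ⟨{ toFun := fun x => fun i => g i (x i)
            map_add' := ?_
            map_smul' := ?_ }, ?_⟩
  · intro x y
    funext i
    show g i (x i + y i) = g i (x i) + g i (y i)
    rw [map_add]
  · intro c x
    funext i
    show g i (MulOpposite.op (c.unop i) • (x i)) = g i (x i) * c.unop i
    rw [map_smul]
    rfl
  · intro x
    funext i
    have hmem : (x : ∀ j, R j) i ∈ J i := ⟨x, x.2, rfl⟩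
    have h1 : g i ((x : ∀ j, R j) i) = f (w i ⟨(x : ∀ j, R j) i, hmem⟩) i :=
      hg i ⟨(x : ∀ j, R j) i, hmem⟩
    show g i ((x : ∀ j, R j) i) = f x i
    rw [h1]
    apply key
    exact hw i ⟨(x : ∀ j, R j) i, hmem⟩

/-- A direct product of rings `R = ∏ᵢ Rᵢ` is right small injective iff each `Rᵢ` is. -/
theorem stmt_4 {ι : Type*} (R : ι → Type*) [∀ i, Ring (R i)] :
    SmallInjective (∀ i, R i) (∀ i, R i) ↔ ∀ i, SmallInjective (R i) (R i) := by
  classical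
  exact ⟨fun h i => aux_fwd R h i, fun h => aux_bwd R h⟩
end

section
/- Let R be right small injective and e² = e ∈ R with ReR = R. Then the corner ring eRe is right small injective. -/
/-- The corner ring `eRe` associated to an idempotent `e` of `R`, with identity `e`. -/
def Corner {R : Type*} [Ring R] (e : {a : R // IsIdempotentElem a}) : Type _ :=
  {x : R // (e : R) * x * e = x}

namespace Corner

variable {R : Type*} [Ring R] (e : {a : R // IsIdempotentElem a})

theorem left_absorb {x : R} (hx : (e : R) * x * e = x) : (e : R) * x = x := by
  conv_lhs => rw [← hx]
  rw [← mul_assoc, ← mul_assoc, e.2.eq]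
  exact hx

theorem right_absorb {x : R} (hx : (e : R) * x * e = x) : x * e = x := by
  conv_lhs => rw [← hx]
  rw [mul_assoc, e.2.eq]
  exact hx

instance : Add (Corner e) :=
  ⟨fun x y => ⟨x.1 + y.1, by rw [mul_add, add_mul, x.2, y.2]⟩⟩

instance : Zero (Corner e) := ⟨⟨0, by rw [mul_zero, zero_mul]⟩⟩

instance : Neg (Corner e) := ⟨fun x => ⟨-x.1, by rw [mul_neg, neg_mul, x.2]⟩⟩

instance : Mul (Corner e) :=
  ⟨fun x y => ⟨x.1 * y.1, by
    rw [← mul_assoc, mul_assoc (e : R) x.1 y.1, ← mul_assoc (e : R) x.1,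
      left_absorb e x.2, mul_assoc, right_absorb e y.2]⟩⟩

instance : One (Corner e) := ⟨⟨e, by rw [e.2.eq, e.2.eq]⟩⟩

instance : Ring (Corner e) where
  add_assoc a b c := Subtype.ext (add_assoc a.1 b.1 c.1)
  zero_add a := Subtype.ext (zero_add a.1)
  add_zero a := Subtype.ext (add_zero a.1)
  add_comm a b := Subtype.ext (add_comm a.1 b.1)
  neg_add_cancel a := Subtype.ext (neg_add_cancel a.1)
  nsmul := nsmulRec
  zsmul := zsmulRec
  mul_assoc a b c := Subtype.ext (mul_assoc a.1 b.1 c.1)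
  one_mul a := Subtype.ext (left_absorb e a.2)
  mul_one a := Subtype.ext (right_absorb e a.2)
  left_distrib a b c := Subtype.ext (left_distrib a.1 b.1 c.1)
  right_distrib a b c := Subtype.ext (right_distrib a.1 b.1 c.1)
  zero_mul a := Subtype.ext (zero_mul a.1)
  mul_zero a := Subtype.ext (mul_zero a.1)

end Corner


open MulOpposite


section AuxRing
variable {A : Type*} [Ring A]

theorem aux_swap {a b : A} (h : IsUnit (1 - a * b)) : IsUnit (1 - b * a) := by
  obtain ⟨u, hu⟩ := h
  have h1 : (1 - a * b) * (↑u⁻¹ : A) = 1 := by rw [← hu]; exact u.mul_inv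
  have h2 : (↑u⁻¹ : A) * (1 - a * b) = 1 := by rw [← hu]; exact u.inv_mul
  refine isUnit_iff_exists.mpr ⟨1 + b * ↑u⁻¹ * a, ?_, ?_⟩
  · have key : (1 - b * a) * (1 + b * ↑u⁻¹ * a)
        = 1 + b * ((1 - a * b) * ↑u⁻¹ - 1) * a := by noncomm_ring
    rw [key, h1]; noncomm_ring
  · have key : (1 + b * ↑u⁻¹ * a) * (1 - b * a)
        = 1 + b * (↑u⁻¹ * (1 - a * b) - 1) * a := by noncomm_ring
    rw [key, h2]; noncomm_ring

theorem aux_qr {t : A} (h : ∀ s : A, ∃ v, (1 - t * s) * v = 1) (s : A) :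
    IsUnit (1 - t * s) := by
  obtain ⟨u, hu⟩ := h s
  have hu' : 1 - t * -(s * u) = u := by
    have : (1 - t * s) * u = u - t * (s * u) := by noncomm_ring
    rw [this] at hu
    rw [mul_neg, sub_neg_eq_add, ← hu]; noncomm_ring
  obtain ⟨v, hv⟩ := h (-(s * u))
  rw [hu'] at hv
  have hts : 1 - t * s = v := by
    calc 1 - t * s = (1 - t * s) * (u * v) := by rw [hv, mul_one]
    _ = ((1 - t * s) * u) * v := by rw [mul_assoc]
    _ = v := by rw [hu, one_mul]
  exact isUnit_iff_exists.mpr ⟨u, hu, by rw [hts]; exact hv⟩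

theorem aux_corner {e s u : A} (hs : s * e = s) (hes : e * s = s)
    (hue : u * e = u) (heu : e * u = u) (h1 : (e - s) * u = e) (h2 : u * (e - s) = e) :
    IsUnit (1 - s) := by
  refine isUnit_iff_exists.mpr ⟨1 - e + u, ?_, ?_⟩
  · calc (1 - s) * (1 - e + u) = 1 - e + u - s + s * e - s * u := by noncomm_ring
    _ = 1 - e + (u - s * u) := by rw [hs]; noncomm_ring
    _ = 1 - e + (e * u - s * u) := by rw [heu]
    _ = 1 - e + (e - s) * u := by rw [sub_mul]
    _ = 1 := by rw [h1]; noncomm_ring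
  · calc (1 - e + u) * (1 - s) = 1 - s - e + e * s + u - u * s := by noncomm_ring
    _ = 1 - e + (u - u * s) := by rw [hes]; noncomm_ring
    _ = 1 - e + (u * e - u * s) := by rw [hue]
    _ = 1 - e + u * (e - s) := by rw [mul_sub]
    _ = 1 := by rw [h2]; noncomm_ring

/-- "x is in the Jacobson radical" property. -/
def URight (x : A) : Prop := ∀ r : A, IsUnit (1 - x * r)

theorem URight.zero : URight (0 : A) := fun r => by simp

theorem URight.add {x y : A} (hx : URight x) (hy : URight y) : URight (x + y) := by
  intro r
  obtain ⟨u, hu⟩ := hx r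
  have h1 : (1 - x * r) * (↑u⁻¹ : A) = 1 := by rw [← hu]; exact u.mul_inv
  have hy' : IsUnit (1 - (↑u⁻¹ : A) * (y * r)) := by
    refine aux_swap ?_
    have := hy (r * ↑u⁻¹)
    rwa [show y * (r * (↑u⁻¹ : A)) = y * r * ↑u⁻¹ by rw [mul_assoc]] at this
  have key : 1 - (x + y) * r = (1 - x * r) * (1 - ↑u⁻¹ * (y * r)) := by
    have : (1 - x * r) * (1 - (↑u⁻¹ : A) * (y * r))
        = 1 - x * r - ((1 - x * r) * ↑u⁻¹) * (y * r) := by noncomm_ring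
    rw [this, h1]; noncomm_ring
  rw [key]
  exact (hx r).mul hy'

theorem URight.mul_right {x : A} (hx : URight x) (a : A) : URight (x * a) := by
  intro r; rw [mul_assoc]; exact hx (a * r)

theorem eq_top_of_one_mem {K : Submodule Aᵐᵒᵖ A} (h : (1 : A) ∈ K) : K = ⊤ := by
  rw [Submodule.eq_top_iff']
  intro x
  have := K.smul_mem (MulOpposite.op x) h
  rwa [op_smul_eq_mul, one_mul] at this

theorem small_of_URight {I : Submodule Aᵐᵒᵖ A} (hI : ∀ x ∈ I, URight x) :
    IsSmallRightIdeal I := by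
  intro K hK
  have h1 : (1 : A) ∈ I ⊔ K := hK ▸ Submodule.mem_top
  obtain ⟨i, hi, k, hk, hik⟩ := Submodule.mem_sup.mp h1
  have hu : IsUnit k := by
    have := hI i hi 1
    rw [mul_one] at this
    have hk1 : k = 1 - i := eq_sub_of_add_eq' hik
    rwa [← hk1] at this
  obtain ⟨u, hu⟩ := hu
  have h1K : (1 : A) ∈ K := by
    have := K.smul_mem (MulOpposite.op (↑u⁻¹ : A)) hk
    rwa [op_smul_eq_mul, ← hu, u.mul_inv] at this
  exact eq_top_of_one_mem h1K

end AuxRing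

section CornerAux

variable {R : Type*} [Ring R] (e : {a : R // IsIdempotentElem a})

theorem idem_sandwich (a : R) :
    (e : R) * ((e : R) * a * (e : R)) * (e : R) = (e : R) * a * (e : R) := by
  have h := e.2.eq
  calc (e : R) * ((e : R) * a * (e : R)) * (e : R)
      = ((e : R) * (e : R)) * a * ((e : R) * (e : R)) := by noncomm_ring
  _ = (e : R) * a * (e : R) := by rw [h]

/-- The element `e a e` of the corner ring. -/
def cmk (a : R) : Corner e := ⟨(e : R) * a * (e : R), idem_sandwich e a⟩

theorem Corner.val_sub (x y : Corner e) : (x - y).1 = x.1 - y.1 := by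
  rw [sub_eq_add_neg, sub_eq_add_neg]; rfl

theorem sandwich_mul {x : R} (hx : x * (e : R) = x) (a : R) :
    x * ((e : R) * a * (e : R)) = x * a * (e : R) := by
  calc x * ((e : R) * a * (e : R)) = (x * (e : R)) * a * (e : R) := by noncomm_ring
  _ = x * a * (e : R) := by rw [hx]

end CornerAux

/-- If `R` is right small injective and `e` is an idempotent of `R` with `ReR = R`
(here expressed as: the left ideal generated by `eR` is all of `R`), then the corner
ring `eRe` is right small injective. -/
theorem stmt_5 {R : Type*} [Ring R] (h : SmallInjective R R)
    (e : {a : R // IsIdempotentElem a})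
    (he : Ideal.span (Set.range fun r => (e : R) * r) = ⊤) :
    SmallInjective (Corner e) (Corner e) := by
  classical
  intro T hT f
  -- Step 1: elements of T are right quasi-regular in R
  have hTU : ∀ t : Corner e, t ∈ T → URight (t.1) := by
    intro t ht
    have hS : ∀ s : Corner e, ∃ v : Corner e, (1 - t * s) * v = 1 := by
      intro s
      have hts : t * s ∈ T := by
        have := T.smul_mem (MulOpposite.op s) ht
        rwa [op_smul_eq_mul] at this
      have hsup : T ⊔ Submodule.span (Corner e)ᵐᵒᵖ {1 - t * s} = ⊤ := by
        apply eq_top_of_one_mem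
        exact Submodule.mem_sup.mpr ⟨t * s, hts, 1 - t * s,
          Submodule.mem_span_singleton_self _, by abel⟩
      have h1 : (1 : Corner e) ∈ Submodule.span (Corner e)ᵐᵒᵖ {1 - t * s} := by
        rw [hT _ hsup]; exact Submodule.mem_top
      obtain ⟨a, ha⟩ := Submodule.mem_span_singleton.mp h1
      exact ⟨a.unop, ha⟩
    have hSU : ∀ s : Corner e, IsUnit ((1 : Corner e) - t * s) := fun s => aux_qr hS s
    intro r
    have hte : t.1 * (e : R) = t.1 := Corner.right_absorb e t.2
    have het : (e : R) * t.1 = t.1 := Corner.left_absorb e t.2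
    obtain ⟨u, hu⟩ := hSU (cmk e r)
    have h1 : (1 - t * cmk e r) * ↑u⁻¹ = 1 := by rw [← hu]; exact u.mul_inv
    have h2 : (↑u⁻¹ : Corner e) * (1 - t * cmk e r) = 1 := by rw [← hu]; exact u.inv_mul
    set uu : Corner e := ↑u⁻¹ with huu
    have h1' : ((e : R) - t.1 * ((e : R) * r * (e : R))) * uu.1 = (e : R) := by
      have := congrArg Subtype.val h1
      rwa [show ((1 - t * cmk e r) * uu).1 = (1 - t * cmk e r).1 * uu.1 from rfl,
        Corner.val_sub] at this
    have h2' : uu.1 * ((e : R) - t.1 * ((e : R) * r * (e : R))) = (e : R) := by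
      have := congrArg Subtype.val h2
      rwa [show (uu * (1 - t * cmk e r)).1 = uu.1 * (1 - t * cmk e r).1 from rfl,
        Corner.val_sub] at this
    have hq1 : ((e : R) * r * (e : R)) * (e : R) = (e : R) * r * (e : R) := by
      rw [mul_assoc, e.2.eq]
    have hs' : (t.1 * ((e : R) * r * (e : R))) * (e : R) = t.1 * ((e : R) * r * (e : R)) := by
      rw [mul_assoc, hq1]
    have hes' : (e : R) * (t.1 * ((e : R) * r * (e : R))) = t.1 * ((e : R) * r * (e : R)) := by
      rw [← mul_assoc, het]
    have hcor : IsUnit (1 - t.1 * ((e : R) * r * (e : R))) :=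
      aux_corner hs' hes' (Corner.right_absorb e uu.2) (Corner.left_absorb e uu.2) h1' h2'
    have hrw : t.1 * ((e : R) * r * (e : R)) = (t.1 * r) * (e : R) := by
      rw [sandwich_mul e hte]
    rw [hrw] at hcor
    have hsw := aux_swap hcor
    rwa [← mul_assoc, het] at hsw
  -- Step 2: the graph submodule
  set G : Submodule Rᵐᵒᵖ (R × R) :=
    Submodule.span Rᵐᵒᵖ (Set.range fun t : T => (((t : Corner e)).1, (f t).1)) with hGdef
  have claimA : ∀ p ∈ G, ∀ a : R, ∃ t' : T,
      ((t' : Corner e)).1 = (e : R) * p.1 * a * (e : R) ∧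
        p.2 * a * (e : R) = (f t').1 := by
    intro p hp
    refine Submodule.span_induction ?_ ?_ ?_ ?_ hp
    · rintro _ ⟨t, rfl⟩ a
      refine ⟨MulOpposite.op (cmk e a) • t, ?_, ?_⟩
      · show ((t : Corner e) * cmk e a).1 = _
        show (t : Corner e).1 * ((e : R) * a * (e : R)) = _
        rw [sandwich_mul e (Corner.right_absorb e (t : Corner e).2),
          Corner.left_absorb e (t : Corner e).2]
      · show (f t).1 * a * (e : R) = (f (MulOpposite.op (cmk e a) • t)).1
        rw [map_smul]
        show _ = ((f t) * cmk e a).1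
        show _ = (f t).1 * ((e : R) * a * (e : R))
        rw [sandwich_mul e (Corner.right_absorb e (f t).2)]
    · intro a
      refine ⟨0, ?_, ?_⟩
      · show ((0 : Corner e)).1 = (e : R) * (0 : R × R).1 * a * (e : R)
        show (0 : R) = (e : R) * 0 * a * (e : R)
        simp
      · show (0 : R × R).2 * a * (e : R) = (f 0).1
        rw [map_zero]
        show (0 : R) * a * (e : R) = (0 : R)
        simp
    · intro p q _ _ ihp ihq a
      obtain ⟨t1, h11, h12⟩ := ihp a
      obtain ⟨t2, h21, h22⟩ := ihq a
      refine ⟨t1 + t2, ?_, ?_⟩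
      · show ((t1 : Corner e) + (t2 : Corner e)).1 = (e : R) * (p + q).1 * a * (e : R)
        show (t1 : Corner e).1 + (t2 : Corner e).1 = (e : R) * (p.1 + q.1) * a * (e : R)
        rw [h11, h21]; noncomm_ring
      · show (p + q).2 * a * (e : R) = (f (t1 + t2)).1
        rw [map_add]
        show (p.2 + q.2) * a * (e : R) = (f t1).1 + (f t2).1
        rw [← h12, ← h22]; noncomm_ring
    · intro m p _ ihp a
      obtain ⟨t', h1, h2⟩ := ihp (m.unop * a)
      refine ⟨t', ?_, ?_⟩
      · show _ = (e : R) * (p.1 * m.unop) * a * (e : R)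
        rw [h1]; noncomm_ring
      · show (p.2 * m.unop) * a * (e : R) = _
        rw [← h2]; noncomm_ring
  -- the graph is a graph of a function
  have hgraph : ∀ (x : R × R), x ∈ G → x.fst = 0 → x.snd = 0 := by
    intro p hp hp1
    have h0 : ∀ a : R, p.2 * a * (e : R) = 0 := by
      intro a
      obtain ⟨t', h1, h2⟩ := claimA p hp a
      have ht0 : t' = 0 := by
        have hv : (t' : Corner e).1 = 0 := by rw [h1, hp1]; simp
        exact Subtype.ext (Subtype.ext hv)
      rw [h2, ht0, map_zero]; rfl
    have key : ∀ x ∈ Ideal.span (Set.range fun r => (e : R) * r),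
        ∀ c : R, p.2 * c * x = 0 := by
      intro x hx
      refine Submodule.span_induction ?_ ?_ ?_ ?_ hx
      · rintro _ ⟨r, rfl⟩ c
        rw [← mul_assoc, h0 c, zero_mul]
      · intro c; simp
      · intro x y _ _ ihx ihy c
        rw [mul_add, ihx c, ihy c, add_zero]
      · intro m x _ ihx c
        rw [smul_eq_mul, ← mul_assoc, mul_assoc p.2 c m]
        exact ihx (c * m)
    have h1 : (1 : R) ∈ Ideal.span (Set.range fun r => (e : R) * r) := by
      rw [he]; exact Submodule.mem_top
    have := key 1 h1 1
    simpa using this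
  -- Step 3: smallness of the image ideal
  have hU : ∀ p : R × R, p ∈ G → URight p.1 := by
    intro p hp
    refine Submodule.span_induction ?_ ?_ ?_ ?_ hp
    · rintro _ ⟨t, rfl⟩
      exact hTU _ t.2
    · exact URight.zero
    · intro x y _ _ ihx ihy; exact ihx.add ihy
    · intro m x _ ihx; exact ihx.mul_right m.unop
  have hIsmall : IsSmallRightIdeal (G.map (LinearMap.fst Rᵐᵒᵖ R R)) := by
    apply small_of_URight
    rintro x ⟨p, hp, rfl⟩
    exact hU p hp
  obtain ⟨g, hg⟩ := h _ hIsmall (G.toLinearPMapAux hgraph)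
  have hgx : ∀ x : R, g x = g 1 * x := by
    intro x
    have hx1 : (MulOpposite.op x) • (1 : R) = x := by rw [op_smul_eq_mul, one_mul]
    conv_lhs => rw [← hx1]
    rw [map_smul, op_smul_eq_mul]
  have hft : ∀ t : T, (f t).1 = g 1 * (t : Corner e).1 := by
    intro t
    have hmem : ((t : Corner e).1, (f t).1) ∈ G := Submodule.subset_span ⟨t, rfl⟩
    have hmem1 : (t : Corner e).1 ∈ G.map (LinearMap.fst Rᵐᵒᵖ R R) := ⟨_, hmem, rfl⟩
    have hval : G.toLinearPMapAux hgraph ⟨_, hmem1⟩ = (f t).1 :=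
      (Submodule.existsUnique_from_graph (g := G)
        (fun {x} hx hx' => hgraph x hx hx') hmem1).unique
        (Submodule.valFromGraph_mem hgraph hmem1) hmem
    calc (f t).1 = G.toLinearPMapAux hgraph ⟨_, hmem1⟩ := hval.symm
    _ = g ((t : Corner e).1) := (hg ⟨_, hmem1⟩).symm
    _ = g 1 * (t : Corner e).1 := hgx _
  refine ⟨{ toFun := fun x => cmk e (g 1) * x,
            map_add' := fun x y => mul_add _ x y,
            map_smul' := fun m x => ?_ }, ?_⟩
  · show cmk e (g 1) * (x * m.unop) = (cmk e (g 1) * x) * m.unop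
    rw [mul_assoc]
  · intro x
    show cmk e (g 1) * ↑x = f x
    apply Subtype.ext
    show ((e : R) * g 1 * (e : R)) * (x : Corner e).1 = (f x).1
    calc ((e : R) * g 1 * (e : R)) * (x : Corner e).1
        = ((e : R) * g 1) * ((e : R) * (x : Corner e).1) := by rw [mul_assoc]
    _ = ((e : R) * g 1) * (x : Corner e).1 := by
        rw [Corner.left_absorb e (x : Corner e).2]
    _ = (e : R) * (g 1 * (x : Corner e).1) := by rw [mul_assoc]
    _ = (e : R) * (f x).1 := by rw [← hft x]
    _ = (f x).1 := Corner.left_absorb e (f x).2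
end

section
/- If R is right small injective, then R is right mininjective: every R-homomorphism from a minimal right ideal of R to R_R extends to an endomorphism of R_R. -/
theorem IsAtom.isCompl_of_sup_eq_top {α : Type*} [Lattice α] [BoundedOrder α] {a b : α}
    (ha : IsAtom a) (hab : a ⊔ b = ⊤) (hb : b ≠ ⊤) : IsCompl a b :=
  ⟨ha.not_le_iff_disjoint.mp fun hle => hb (by rwa [sup_eq_right.mpr hle] at hab),
    codisjoint_iff.mpr hab⟩

theorem Submodule.exists_extend_of_isCompl {R M N : Type*} [Ring R] [AddCommGroup M] [Module R M]
    [AddCommGroup N] [Module R N] {p q : Submodule R M} (hpq : IsCompl p q) (f : p →ₗ[R] N) :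
    ∃ g : M →ₗ[R] N, ∀ x : p, g x = f x :=
  ⟨f ∘ₗ p.projectionOnto q hpq, fun x => by simp⟩

theorem IsAtom.isSmallRightIdeal_or_exists_isCompl {R : Type*} [Ring R]
    {I : Submodule Rᵐᵒᵖ R} (hI : IsAtom I) : IsSmallRightIdeal I ∨ ∃ K, IsCompl I K := by
  by_cases hs : IsSmallRightIdeal I
  · exact Or.inl hs
  · simp only [IsSmallRightIdeal, not_forall] at hs
    obtain ⟨K, hIK, hK⟩ := hs
    exact Or.inr ⟨K, hI.isCompl_of_sup_eq_top hIK hK⟩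

/-- If `R` is right small injective, then `R` is right mininjective: every homomorphism
from a minimal right ideal of `R` to `R` extends to an endomorphism of `R` as a right
`R`-module. -/
theorem stmt_6 {R : Type*} [Ring R] (h : SmallInjective R R)
    (I : Submodule Rᵐᵒᵖ R) (hI : IsAtom I) (f : I →ₗ[Rᵐᵒᵖ] R) :
    ∃ g : R →ₗ[Rᵐᵒᵖ] R, ∀ x : I, g x = f x := by
  rcases hI.isSmallRightIdeal_or_exists_isCompl with hs | ⟨K, hK⟩
  · exact h I hs f
  · exact Submodule.exists_extend_of_isCompl hK f
end

section
/- If R is right small injective, then for any two small right ideals I and L of R, the left annihilator satisfies l(I ∩ L) = l(I) + l(L). -/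
/-- The left annihilator `l(X) = {r : r * x = 0 ∀ x ∈ X}` of a subset `X ⊆ R`,
as a left ideal of `R`. -/
def leftAnn (R : Type*) [Ring R] (X : Set R) : Submodule R R where
  carrier := {r | ∀ x ∈ X, r * x = 0}
  add_mem' := by
    intro a b ha hb x hx
    rw [add_mul, ha x hx, hb x hx, add_zero]
  zero_mem' := by intro x hx; rw [zero_mul]
  smul_mem' := by
    intro c a ha x hx
    show c * a * x = 0
    rw [mul_assoc, ha x hx, mul_zero]

/-- The right annihilator `r(X) = {r : x * r = 0 ∀ x ∈ X}` of a subset `X ⊆ R`,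
as a right ideal of `R`. -/
def rightAnn (R : Type*) [Ring R] (X : Set R) : Submodule Rᵐᵒᵖ R where
  carrier := {r | ∀ x ∈ X, x * r = 0}
  add_mem' := by
    intro a b ha hb x hx
    rw [mul_add, ha x hx, hb x hx, add_zero]
  zero_mem' := by intro x hx; rw [mul_zero]
  smul_mem' := by
    intro c a ha x hx
    show x * (a * c.unop) = 0
    rw [← mul_assoc, ha x hx, zero_mul]

/-- If `R` is right small injective, then for any two small right ideals `I` and `L`,
`l(I ∩ L) = l(I) + l(L)`. -/
theorem stmt_7 {R : Type*} [Ring R] (h : SmallInjective R R)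
    (I L : Submodule Rᵐᵒᵖ R) (hI : IsSmallRightIdeal I) (hL : IsSmallRightIdeal L) :
    leftAnn R (↑I ∩ ↑L) = leftAnn R ↑I ⊔ leftAnn R ↑L := by
  apply le_antisymm
  · intro a ha
    have ha' : ∀ x : R, x ∈ I → x ∈ L → a * x = 0 := fun x h1 h2 => ha x ⟨h1, h2⟩
    -- I ⊔ L is small
    have hIL : IsSmallRightIdeal (I ⊔ L) := by
      intro K hK
      rw [sup_assoc] at hK
      exact hL K (hI (L ⊔ K) hK)
    have dec : ∀ z : (I ⊔ L : Submodule Rᵐᵒᵖ R), ∃ p ∈ I, ∃ q ∈ L, p + q = (z : R) :=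
      fun z => Submodule.mem_sup.mp z.2
    choose u hu v hv huv using dec
    have key : ∀ (z : (I ⊔ L : Submodule Rᵐᵒᵖ R)) (p q : R), p ∈ I → q ∈ L →
        p + q = (z : R) → a * u z = a * p := by
      intro z p q hp hq heq
      have h1 : u z - p ∈ I := sub_mem (hu z) hp
      have h2 : u z - p = q - v z := by
        rw [sub_eq_sub_iff_add_eq_add]
        rw [huv z, ← heq, add_comm]
      have h3 : u z - p ∈ L := by rw [h2]; exact sub_mem hq (hv z)
      have h4 : a * (u z - p) = 0 := ha' _ h1 h3
      rw [mul_sub, sub_eq_zero] at h4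
      exact h4
    let f : (I ⊔ L : Submodule Rᵐᵒᵖ R) →ₗ[Rᵐᵒᵖ] R :=
      { toFun := fun z => a * u z
        map_add' := by
          intro z w
          have : a * u (z + w) = a * (u z + u w) :=
            key (z + w) (u z + u w) (v z + v w) (add_mem (hu z) (hu w))
              (add_mem (hv z) (hv w))
              (by push_cast [← huv z, ← huv w]; abel)
          show a * u (z + w) = a * u z + a * u w
          rw [this, mul_add]
        map_smul' := by
          intro c z
          have hmem : u z * c.unop ∈ I := by
            have := I.smul_mem c (hu z); exact this
          have hmem2 : v z * c.unop ∈ L := by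
            have := L.smul_mem c (hv z); exact this
          have heq : u z * c.unop + v z * c.unop = ((c • z : (I ⊔ L : Submodule Rᵐᵒᵖ R)) : R) := by
            have : ((c • z : (I ⊔ L : Submodule Rᵐᵒᵖ R)) : R) = (z : R) * c.unop := rfl
            rw [this, ← huv z, add_mul]
          have := key (c • z) (u z * c.unop) (v z * c.unop) hmem hmem2 heq
          simp only [RingHom.id_apply]
          show a * u (c • z) = c • (a * u z)
          rw [this, ← mul_assoc]
          rfl }
    obtain ⟨g, hg⟩ := h (I ⊔ L) hIL f
    set c := g 1 with hc
    have hgr : ∀ r : R, g r = c * r := by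
      intro r
      have : g r = g ((MulOpposite.op r) • (1 : R)) := by
        congr 1
        show r = 1 * r
        rw [one_mul]
      rw [this, map_smul]
      rfl
    have hcI : ∀ x ∈ I, c * x = a * x := by
      intro x hx
      have hxm : x ∈ I ⊔ L := Submodule.mem_sup_left hx
      have h1 : g x = f ⟨x, hxm⟩ := hg ⟨x, hxm⟩
      have h2 : f ⟨x, hxm⟩ = a * x := by
        show a * u ⟨x, hxm⟩ = a * x
        exact key ⟨x, hxm⟩ x 0 hx (zero_mem L) (by rw [add_zero])
      rw [← hgr x, h1, h2]
    have hcL : ∀ x ∈ L, c * x = 0 := by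
      intro x hx
      have hxm : x ∈ I ⊔ L := Submodule.mem_sup_right hx
      have h1 : g x = f ⟨x, hxm⟩ := hg ⟨x, hxm⟩
      have h2 : f ⟨x, hxm⟩ = 0 := by
        show a * u ⟨x, hxm⟩ = 0
        rw [key ⟨x, hxm⟩ 0 x (zero_mem I) hx (by rw [zero_add]), mul_zero]
      rw [← hgr x, h1, h2]
    have hmemI : a - c ∈ leftAnn R (↑I : Set R) := by
      intro x hx
      rw [sub_mul, hcI x hx, sub_self]
    have hmemL : c ∈ leftAnn R (↑L : Set R) := fun x hx => hcL x hx
    exact Submodule.mem_sup.mpr ⟨a - c, hmemI, c, hmemL, sub_add_cancel a c⟩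
  · apply sup_le
    · intro r hr x hx
      exact hr x hx.1
    · intro r hr x hx
      exact hr x hx.2
end

section
/- If R is right small injective, then for all b ∈ R and a ∈ J(R), l(bR ∩ r(a)) = l(b) + Ra. -/
theorem LinearMap.exists_comp_rangeRestrict_eq {S M N P : Type*} [Ring S] [AddCommGroup M]
    [AddCommGroup N] [AddCommGroup P] [Module S M] [Module S N] [Module S P]
    {φ : M →ₗ[S] N} {ψ : M →ₗ[S] P} (h : ker φ ≤ ker ψ) :
    ∃ f : range φ →ₗ[S] P, f ∘ₗ φ.rangeRestrict = ψ :=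
  ⟨(ker φ).liftQ ψ h ∘ₗ φ.quotKerEquivRange.symm, by
    ext x
    exact congrArg ((ker φ).liftQ ψ h) (φ.quotKerEquivRange_symm_apply_image x _)⟩

section

variable {R : Type*} [Ring R]

@[simp]
theorem mem_leftAnn_singleton {x r : R} : r ∈ leftAnn R {x} ↔ r * x = 0 := by
  simp [leftAnn]

@[simp]
theorem mem_rightAnn_singleton {x r : R} : r ∈ rightAnn R {x} ↔ x * r = 0 := by
  simp [rightAnn]

theorem leftAnn_anti {X Y : Set R} (hXY : X ⊆ Y) : leftAnn R Y ≤ leftAnn R X :=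
  fun _ hr x hx => hr x (hXY hx)

theorem leftAnn_span_singleton (b : R) :
    leftAnn R (Submodule.span Rᵐᵒᵖ {b}) = leftAnn R {b} := by
  ext r
  simp only [mem_leftAnn_singleton]
  refine ⟨fun hr => hr b (Submodule.mem_span_singleton_self b), fun hrb y hy => ?_⟩
  obtain ⟨s, rfl⟩ := Submodule.mem_span_singleton.mp hy
  rw [MulOpposite.smul_eq_mul_unop, ← mul_assoc, hrb, zero_mul]

theorem span_singleton_le_leftAnn_rightAnn (a : R) :
    Submodule.span R {a} ≤ leftAnn R (rightAnn R {a}) :=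
  Submodule.span_le.mpr <| Set.singleton_subset_iff.mpr fun _ hr => mem_rightAnn_singleton.mp hr

theorem isUnit_one_sub_of_mem_jacobson {x : R}
    (hx : x ∈ (⊥ : Ideal R).jacobson) : IsUnit (1 - x) := by
  obtain ⟨z, hz⟩ := Ideal.exists_mul_sub_mem_of_sub_one_mem_jacobson (1 - x)
    (by simpa using (⊥ : Ideal R).jacobson.neg_mem hx)
  rw [Ideal.mem_bot, sub_eq_zero] at hz
  -- `J` only provides left inverses; applied once more to `z = 1 + z x`, it makes `z` invertible.
  have hz_sub_one : z - 1 = z * x := by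
    rw [← hz, mul_sub, mul_one, sub_sub_cancel]
  obtain ⟨w, hw⟩ := Ideal.exists_mul_sub_mem_of_sub_one_mem_jacobson z
    (hz_sub_one ▸ Ideal.mul_mem_left _ z hx)
  rw [Ideal.mem_bot, sub_eq_zero] at hw
  have hw_eq : w = 1 - x := left_inv_eq_right_inv hw hz
  exact ⟨⟨1 - x, z, hw_eq ▸ hw, hz⟩, rfl⟩

theorem isSmallRightIdeal_of_le_jacobson {I : Submodule Rᵐᵒᵖ R}
    (hI : (I : Set R) ⊆ (⊥ : Ideal R).jacobson) : IsSmallRightIdeal I := by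
  intro K hK
  obtain ⟨i, hi, k, hk, hik⟩ := Submodule.mem_sup.mp (hK ▸ Submodule.mem_top : (1 : R) ∈ I ⊔ K)
  obtain ⟨u, hu⟩ := isUnit_one_sub_of_mem_jacobson (hI hi)
  have hku : k = u := by rw [hu, ← hik, add_sub_cancel_left]
  refine Submodule.eq_top_iff'.mpr fun y => ?_
  simpa [MulOpposite.smul_eq_mul_unop, hku, ← mul_assoc] using
    K.smul_mem (MulOpposite.op (↑u⁻¹ * y)) hk

theorem SmallInjective.exists_mul_eq_of_rightAnn_le (h : SmallInjective R R)
    {x y : R} (hx : x ∈ (⊥ : Ideal R).jacobson) (hxy : rightAnn R {x} ≤ rightAnn R {y}) :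
    ∃ d, d * x = y := by
  let φ := LinearMap.mulLeft Rᵐᵒᵖ x
  obtain ⟨f, hf⟩ := LinearMap.exists_comp_rangeRestrict_eq (φ := φ)
    (ψ := LinearMap.mulLeft Rᵐᵒᵖ y) fun r hr => by
      simpa using hxy (mem_rightAnn_singleton.mpr hr)
  have hsmall : IsSmallRightIdeal (LinearMap.range φ) :=
    isSmallRightIdeal_of_le_jacobson <| by
      rintro _ ⟨r, rfl⟩
      exact Ideal.mul_mem_right _ _ hx
  obtain ⟨g, hg⟩ := h _ hsmall f
  refine ⟨g 1, ?_⟩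
  calc g 1 * x = g (φ.rangeRestrict 1) := by
        rw [LinearMap.codRestrict_apply, LinearMap.mulLeft_apply, mul_one, ← op_smul_eq_mul,
          ← map_smul, op_smul_eq_mul, one_mul]
    _ = y := by rw [hg, ← LinearMap.comp_apply, hf, LinearMap.mulLeft_apply, mul_one]

end

/-- If `R` is right small injective, then for all `b ∈ R` and `a ∈ J(R)`,
`l(bR ∩ r(a)) = l(b) + Ra`. -/
theorem stmt_9 {R : Type*} [Ring R] (h : SmallInjective R R)
    (b a : R) (ha : a ∈ (⊥ : Ideal R).jacobson) :
    leftAnn R (↑(Submodule.span Rᵐᵒᵖ ({b} : Set R)) ∩ ↑(rightAnn R ({a} : Set R))) =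
      leftAnn R ({b} : Set R) ⊔ Submodule.span R ({a} : Set R) := by
  refine le_antisymm (fun c hc => ?_) (sup_le ?_ ?_)
  · have hab : rightAnn R {a * b} ≤ rightAnn R {c * b} := fun r hr => by
      rw [mem_rightAnn_singleton, mul_assoc] at hr ⊢
      refine hc (b * r) ⟨?_, mem_rightAnn_singleton.mpr hr⟩
      exact Submodule.mem_span_singleton.mpr ⟨MulOpposite.op r, rfl⟩
    obtain ⟨d, hd⟩ := h.exists_mul_eq_of_rightAnn_le (Ideal.mul_mem_right b _ ha) hab
    have hcd : c - d * a ∈ leftAnn R {b} := by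
      rw [mem_leftAnn_singleton, sub_mul, mul_assoc, hd, sub_self]
    simpa using Submodule.add_mem_sup hcd
      (Submodule.smul_mem _ d (Submodule.mem_span_singleton_self a))
  · exact leftAnn_span_singleton b ▸ leftAnn_anti Set.inter_subset_left
  · exact (span_singleton_le_leftAnn_rightAnn a).trans (leftAnn_anti Set.inter_subset_right)
end

section
/- Let R be a semilocal ring and I a right ideal of R. Then every homomorphism from any right ideal of R to I extends to an endomorphism of R_R if and only if every homomorphism from any small right ideal of R to I extends to an endomorphism of R_R. -/
/-! In a semilocal ring every right ideal `K` has a right ideal `L` with `K + L = R` and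
`K ∩ L ⊆ J(R)`: take the preimage of a complement of the image of `K` in the semisimple right
module `R/J(R)`. Then `K ∩ L` is small, so `f : K → I` agrees on `K ∩ L` with an endomorphism `g`
of `R`, and `f` on `K` glues with `g` on `L` to an endomorphism of `R = K + L` extending `f`. -/

theorem Submodule.exists_sup_eq_top_inf_le_ker {R S M N : Type*} [Ring R] [Ring S]
    {σ : R →+* S} [RingHomSurjective σ] [AddCommGroup M] [Module R M] [AddCommGroup N]
    [Module S N] [IsSemisimpleModule S N] (f : M →ₛₗ[σ] N) (hf : Function.Surjective f)
    (K : Submodule R M) : ∃ L : Submodule R M, K ⊔ L = ⊤ ∧ K ⊓ L ≤ LinearMap.ker f := by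
  obtain ⟨C, hC⟩ := ComplementedLattice.exists_isCompl (K.map f)
  refine ⟨C.comap f, ?_, ?_⟩
  · have hmap : (K ⊔ C.comap f : Submodule R M).map f = ⊤ := by
      rw [Submodule.map_sup, Submodule.map_comap_eq_of_surjective hf, hC.sup_eq_top]
    rw [← sup_eq_left.2 (LinearMap.ker_le_comap (p := C) f), ← sup_assoc,
      ← Submodule.comap_map_eq, hmap, Submodule.comap_top]
  · rw [LinearMap.le_ker_iff_map, eq_bot_iff, ← hC.inf_eq_bot]
    exact (Submodule.map_inf_le f).trans
      (inf_le_inf_left _ (Submodule.map_comap_le f C))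

theorem Ideal.Quotient.isSemisimpleRing_of_isSemisimpleModule {R : Type*} [Ring R]
    (I : Ideal R) [I.IsTwoSided] [IsSemisimpleModule R (R ⧸ I)] : IsSemisimpleRing (R ⧸ I) :=
  let e : (R ⧸ I) →ₛₗ[Ideal.Quotient.mk I] (R ⧸ I) :=
    { AddMonoidHom.id _ with map_smul' := fun _ _ ↦ rfl }
  (e.isSemisimpleModule_iff_of_bijective Function.bijective_id).1 ‹_›

theorem exists_sup_eq_top_inf_le_jacobson {R : Type*} [Ring R]
    [IsSemisimpleModule R (R ⧸ (⊥ : Ideal R).jacobson)] (K : Submodule Rᵐᵒᵖ R) :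
    ∃ L : Submodule Rᵐᵒᵖ R, K ⊔ L = ⊤ ∧ ∀ x ∈ K ⊓ L, x ∈ (⊥ : Ideal R).jacobson := by
  set J := (⊥ : Ideal R).jacobson
  have := Ideal.Quotient.isSemisimpleRing_of_isSemisimpleModule J
  -- by Wedderburn–Artin, `R ⧸ J` is then also semisimple as a right module over itself
  let σ : Rᵐᵒᵖ →+* (R ⧸ J)ᵐᵒᵖ := RingHom.op (Ideal.Quotient.mk J)
  have : RingHomSurjective σ := ⟨fun y ↦ by
    obtain ⟨x, hx⟩ := Ideal.Quotient.mk_surjective y.unop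
    exact ⟨MulOpposite.op x, congrArg MulOpposite.op hx⟩⟩
  let π : R →ₛₗ[σ] R ⧸ J :=
    { (Ideal.Quotient.mk J : R →+ R ⧸ J) with map_smul' := fun r x ↦ map_mul _ x r.unop }
  obtain ⟨L, hKL, hker⟩ := Submodule.exists_sup_eq_top_inf_le_ker π Ideal.Quotient.mk_surjective K
  exact ⟨L, hKL, fun x hx ↦ Ideal.Quotient.eq_zero_iff_mem.1 (hker hx)⟩

theorem Ideal.exists_mul_one_sub_eq_one_of_mem_jacobson_bot {R : Type*} [Ring R] {x : R}
    (hx : x ∈ (⊥ : Ideal R).jacobson) : ∃ z, z * (1 - x) = 1 := by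
  obtain ⟨z, hz⟩ := Ideal.mem_jacobson_iff.1 hx (-1)
  rw [Ideal.mem_bot] at hz
  exact ⟨z, by rw [← sub_eq_zero, ← hz]; noncomm_ring⟩

theorem Ideal.isUnit_one_sub_of_mem_jacobson_bot {R : Type*} [Ring R] {x : R}
    (hx : x ∈ (⊥ : Ideal R).jacobson) : IsUnit (1 - x) := by
  obtain ⟨z, hz⟩ := exists_mul_one_sub_eq_one_of_mem_jacobson_bot hx
  have hz' : z = 1 - -(z * x) := by rw [← hz]; noncomm_ring
  obtain ⟨w, hw⟩ := exists_mul_one_sub_eq_one_of_mem_jacobson_bot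
    (neg_mem (Ideal.mul_mem_left _ z hx))
  rw [← hz'] at hw
  have hwx : w = 1 - x :=
    calc w = w * (z * (1 - x)) := by rw [hz, mul_one]
      _ = 1 - x := by rw [← mul_assoc, hw, one_mul]
  exact ⟨⟨1 - x, z, hwx ▸ hw, hz⟩, rfl⟩

theorem isSmallRightIdeal_of_le_jacobson_s12 {R : Type*} [Ring R] {T : Submodule Rᵐᵒᵖ R}
    (hT : ∀ x ∈ T, x ∈ (⊥ : Ideal R).jacobson) : IsSmallRightIdeal T := by
  intro M hTM
  obtain ⟨t, ht, m, hm, htm⟩ := Submodule.mem_sup.1 (hTM ▸ Submodule.mem_top : (1 : R) ∈ T ⊔ M)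
  obtain ⟨u, rfl⟩ : IsUnit m := by
    simpa [← htm] using Ideal.isUnit_one_sub_of_mem_jacobson_bot (hT t ht)
  rw [Submodule.eq_top_iff']
  intro x
  simpa using M.smul_mem (MulOpposite.op (↑u⁻¹ * x)) hm

theorem LinearMap.exists_extend_of_sup_eq_top {R M N : Type*} [Ring R] [AddCommGroup M]
    [Module R M] [AddCommGroup N] [Module R N] {K L : Submodule R M} (hKL : K ⊔ L = ⊤)
    (f : K →ₗ[R] N) (g : L →ₗ[R] N) (hfg : ∀ (x : K) (y : L), (x : M) = y → f x = g y) :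
    ∃ h : M →ₗ[R] N, ∀ x : K, h x = f x := by
  let F := LinearPMap.sup ⟨K, f⟩ ⟨L, g⟩ hfg
  have hF : F.domain = ⊤ := (LinearPMap.domain_sup _ _ hfg).trans hKL
  refine ⟨F.toFun ∘ₗ (LinearEquiv.ofTop F.domain hF).symm.toLinearMap, fun x ↦ ?_⟩
  simpa using LinearPMap.sup_apply (f := ⟨K, f⟩) (g := ⟨L, g⟩) hfg x 0 _ (by simp)

/-- Let `R` be semilocal (`R/J(R)` is a semisimple) and `I` a right ideal of `R`. Then every
homomorphism from any right ideal to `I` extends to an endomorphism of `R` as a right module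
iff every homomorphism from any small right ideal to `I` so extends. -/
theorem stmt_12 {R : Type*} [Ring R]
    (hsl : IsSemisimpleModule R (R ⧸ (⊥ : Ideal R).jacobson))
    (I : Submodule Rᵐᵒᵖ R) :
    (∀ (K : Submodule Rᵐᵒᵖ R) (f : K →ₗ[Rᵐᵒᵖ] R), (∀ x : K, f x ∈ I) →
        ∃ g : R →ₗ[Rᵐᵒᵖ] R, ∀ x : K, g x = f x) ↔
    (∀ (K : Submodule Rᵐᵒᵖ R), IsSmallRightIdeal K → ∀ f : K →ₗ[Rᵐᵒᵖ] R,
        (∀ x : K, f x ∈ I) → ∃ g : R →ₗ[Rᵐᵒᵖ] R, ∀ x : K, g x = f x) := by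
  refine ⟨fun h K _ f hf ↦ h K f hf, fun h K f hf ↦ ?_⟩
  obtain ⟨L, hKL, hJ⟩ := exists_sup_eq_top_inf_le_jacobson K
  obtain ⟨g, hg⟩ := h (K ⊓ L) (isSmallRightIdeal_of_le_jacobson_s12 hJ)
    (f ∘ₗ Submodule.inclusion inf_le_left) fun _ ↦ hf _
  refine LinearMap.exists_extend_of_sup_eq_top hKL f (g ∘ₗ L.subtype) fun x y hxy ↦ ?_
  rw [LinearMap.comp_apply, Submodule.subtype_apply, ← hxy, hg ⟨x, x.2, hxy ▸ y.2⟩]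
  rfl
end

section
/- Let I be a right ideal of R such that every right ideal of R lies over a direct summand of R_R. Then every homomorphism from a small right ideal of R to I extends to an endomorphism of R_R if and only if every homomorphism from any right ideal of R to I extends to an endomorphism of R_R. -/
/-- A right ideal `K` lies over a direct summand of `R` if `R = P ⊕ Q` with `P ≤ K` and
`Q ∩ K` small in `R` as a right module. -/
def LiesOverSummand {R : Type*} [Ring R] (K : Submodule Rᵐᵒᵖ R) : Prop :=
  ∃ P Q : Submodule Rᵐᵒᵖ R, IsCompl P Q ∧ P ≤ K ∧ IsSmallRightIdeal (Q ⊓ K)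

theorem Submodule.exists_extension_of_isCompl_of_le {S M N : Type*} [Ring S] [AddCommGroup M]
    [Module S M] [AddCommGroup N] [Module S N] {K P Q : Submodule S M} (hPQ : IsCompl P Q)
    (hPK : P ≤ K) (f : K →ₗ[S] N)
    (hext : ∃ g : M →ₗ[S] N, ∀ x : ↥(Q ⊓ K), g x = f (Submodule.inclusion inf_le_right x)) :
    ∃ h : M →ₗ[S] N, ∀ x : K, h x = f x := by
  obtain ⟨g, hg⟩ := hext
  set h := LinearMap.ofIsCompl hPQ (f ∘ₗ Submodule.inclusion hPK) (g ∘ₗ Q.subtype)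
  refine ⟨h, fun x => ?_⟩
  obtain ⟨p, hp, q, hq, hx⟩ :=
    Submodule.mem_sup.1 (hPQ.sup_eq_top ▸ Submodule.mem_top (x := (x : M)))
  have hqK : q ∈ K := by simpa [← hx] using sub_mem x.2 (hPK hp)
  calc h x = h p + h q := by rw [← hx, map_add]
    _ = f ⟨p, hPK hp⟩ + f ⟨q, hqK⟩ := by
      rw [LinearMap.ofIsCompl_apply_left hPQ (u := ⟨p, hp⟩),
        LinearMap.ofIsCompl_apply_right hPQ (v := ⟨q, hq⟩)]
      exact congrArg _ (hg ⟨q, hq, hqK⟩)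
    _ = f x := by rw [← map_add]; congr; ext; exact hx

/-- If every right ideal of `R` lies over a direct summand of `R`, then for a right ideal
`I`, every homomorphism from a small right ideal to `I` extends to an endomorphism of `R`
iff every homomorphism from any right ideal to `I` so extends. -/
theorem stmt_14 {R : Type*} [Ring R] (hlo : ∀ K : Submodule Rᵐᵒᵖ R, LiesOverSummand K)
    (I : Submodule Rᵐᵒᵖ R) :
    (∀ (K : Submodule Rᵐᵒᵖ R), IsSmallRightIdeal K → ∀ f : K →ₗ[Rᵐᵒᵖ] R,
        (∀ x : K, f x ∈ I) → ∃ g : R →ₗ[Rᵐᵒᵖ] R, ∀ x : K, g x = f x) ↔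
    (∀ (K : Submodule Rᵐᵒᵖ R) (f : K →ₗ[Rᵐᵒᵖ] R), (∀ x : K, f x ∈ I) →
        ∃ g : R →ₗ[Rᵐᵒᵖ] R, ∀ x : K, g x = f x) := by
  refine ⟨fun hsmall K f hfI => ?_, fun hall K _ f hfI => hall K f hfI⟩
  obtain ⟨P, Q, hPQ, hPK, hQK⟩ := hlo K
  exact Submodule.exists_extension_of_isCompl_of_le hPQ hPK f
    (hsmall (Q ⊓ K) hQK (f ∘ₗ Submodule.inclusion inf_le_right) fun x => hfI _)
end

section
/- If the formal upper triangular matrix ring U = [[R, V],[0, S]] is right small injective, then S is right small injective and Hom_S(K, S) = 0 for every right S-submodule K of V_S. -/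
section Triangular

variable (R S V : Type*) [Ring R] [Ring S] [AddCommGroup V]
  [Module R V] [Module Sᵐᵒᵖ V] [SMulCommClass R Sᵐᵒᵖ V]

/-- `V` as a left `R × S`-module, `R` acting on the left. -/
noncomputable instance leftRS : Module (R × S) V := Module.compHom V (RingHom.fst R S)

/-- `V` as a right `R × S`-module, `S` acting on the right. -/
noncomputable instance rightRS : Module (R × S)ᵐᵒᵖ V :=
  Module.compHom V (RingHom.op (RingHom.snd R S))

instance commRS : SMulCommClass (R × S) (R × S)ᵐᵒᵖ V :=
  ⟨fun a b v => smul_comm (a.1 : R) (MulOpposite.op (b.unop.2) : Sᵐᵒᵖ) v⟩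

/-- The formal upper triangular matrix ring `U = [[R, V], [0, S]]`, realized as the
trivial extension of `R × S` by the bimodule `V`:
`((r, s), v) * ((r', s'), v') = ((r * r', s * s'), r • v' + v • s')`. -/
noncomputable abbrev TriangularRing := TrivSqZeroExt (R × S) V

set_option linter.unusedSectionVars false

open TrivSqZeroExt MulOpposite

/-- computation lemmas for the bimodule actions -/
lemma aux_left_smul (p : R × S) (v : V) : p • v = p.1 • v := rfl

lemma aux_right_smul (p : (R × S)ᵐᵒᵖ) (v : V) : p • v = op p.unop.2 • v := rfl

lemma aux_op_smul (a : TriangularRing R S V) (c : (TriangularRing R S V)ᵐᵒᵖ) :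
    c • a = a * c.unop := rfl

/-- The ideal `[[0, V],[0,0]]` of `U`. -/
def auxI0 : Submodule (TriangularRing R S V)ᵐᵒᵖ (TriangularRing R S V) where
  carrier := {u | fst u = 0}
  zero_mem' := rfl
  add_mem' := by
    intro a b ha hb
    show fst (a + b) = 0
    rw [fst_add, ha, hb, add_zero]
  smul_mem' := by
    intro c u hu
    show fst (c • u) = 0
    rw [aux_op_smul, fst_mul, hu, zero_mul]

lemma aux_mem_I0 (u : TriangularRing R S V) : u ∈ auxI0 R S V ↔ fst u = 0 := Iff.rfl

/-- A right ideal of `U` containing an element with unit `fst` is everything. -/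
lemma aux_top_of_fst_one (K : Submodule (TriangularRing R S V)ᵐᵒᵖ (TriangularRing R S V))
    (k : TriangularRing R S V) (hk : k ∈ K) (hk1 : fst k = 1) : K = ⊤ := by
  have h1 : (1 : TriangularRing R S V) ∈ K := by
    set e : TriangularRing R S V := inl (1 : R × S) + inr (-snd k) with he
    have hef : fst e = 1 := by rw [he, fst_add, fst_inl, fst_inr, add_zero]
    have hes : snd e = -snd k := by rw [he, snd_add, snd_inl, snd_inr, zero_add]
    have hmem := K.smul_mem (op e) hk
    rw [aux_op_smul, unop_op] at hmem
    have heq : k * e = 1 := by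
      refine TrivSqZeroExt.ext ?_ ?_
      · rw [fst_mul, hk1, hef, one_mul, fst_one]
      · rw [snd_mul, hk1, hef, hes, snd_one, one_smul, op_one, one_smul, neg_add_cancel]
    rwa [heq] at hmem
  rw [Submodule.eq_top_iff']
  intro u
  have := K.smul_mem (op u) h1
  rwa [aux_op_smul, unop_op, one_mul] at this

lemma aux_I0_small : IsSmallRightIdeal (auxI0 R S V) := by
  intro K hK
  have h1 : (1 : TriangularRing R S V) ∈ auxI0 R S V ⊔ K := hK ▸ Submodule.mem_top
  obtain ⟨i, hi, k, hk, hik⟩ := Submodule.mem_sup.mp h1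
  refine aux_top_of_fst_one R S V K k hk ?_
  have := congrArg fst hik
  rw [fst_add, (aux_mem_I0 R S V i).mp hi, zero_add, fst_one] at this
  exact this

/-- The ideal `[[0, K],[0,0]]` of `U` for a submodule `K ≤ V`. -/
def auxIK (K : Submodule Sᵐᵒᵖ V) :
    Submodule (TriangularRing R S V)ᵐᵒᵖ (TriangularRing R S V) where
  carrier := {u | fst u = 0 ∧ snd u ∈ K}
  zero_mem' := ⟨rfl, K.zero_mem⟩
  add_mem' := by
    rintro a b ⟨ha1, ha2⟩ ⟨hb1, hb2⟩
    exact ⟨by rw [fst_add, ha1, hb1, add_zero], by rw [snd_add]; exact K.add_mem ha2 hb2⟩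
  smul_mem' := by
    rintro c u ⟨hu1, hu2⟩
    rw [Set.mem_setOf_eq, aux_op_smul, fst_mul, snd_mul, hu1, zero_mul]
    refine ⟨rfl, ?_⟩
    rw [aux_left_smul, Prod.fst_zero, zero_smul, zero_add, aux_right_smul, unop_op]
    exact K.smul_mem _ hu2

/-- The ideal `[[0, V],[0, I]]` of `U` for a right ideal `I ≤ S`. -/
def auxIU (I : Submodule Sᵐᵒᵖ S) :
    Submodule (TriangularRing R S V)ᵐᵒᵖ (TriangularRing R S V) where
  carrier := {u | (fst u).1 = 0 ∧ (fst u).2 ∈ I}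
  zero_mem' := ⟨rfl, I.zero_mem⟩
  add_mem' := by
    rintro a b ⟨ha1, ha2⟩ ⟨hb1, hb2⟩
    constructor
    · rw [fst_add, Prod.fst_add, ha1, hb1, add_zero]
    · rw [fst_add, Prod.snd_add]; exact I.add_mem ha2 hb2
  smul_mem' := by
    rintro c u ⟨hu1, hu2⟩
    rw [Set.mem_setOf_eq, aux_op_smul, fst_mul]
    constructor
    · rw [Prod.fst_mul, hu1, zero_mul]
    · rw [Prod.snd_mul]
      exact I.smul_mem (op (fst c.unop).2) hu2

/-- The image of a right ideal of `U` under the projection to `S`. -/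
def auxKS (K : Submodule (TriangularRing R S V)ᵐᵒᵖ (TriangularRing R S V)) :
    Submodule Sᵐᵒᵖ S where
  carrier := {s | ∃ k ∈ K, (fst k).2 = s}
  zero_mem' := ⟨0, K.zero_mem, rfl⟩
  add_mem' := by
    rintro a b ⟨k, hk, hka⟩ ⟨l, hl, hlb⟩
    exact ⟨k + l, K.add_mem hk hl, by rw [fst_add, Prod.snd_add, hka, hlb]⟩
  smul_mem' := by
    rintro c s ⟨k, hk, hks⟩
    refine ⟨k * inl ((1 : R), c.unop), K.smul_mem (op (inl ((1 : R), c.unop))) hk, ?_⟩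
    rw [fst_mul, fst_inl, Prod.snd_mul, hks]
    rfl

lemma aux_IU_small (I : Submodule Sᵐᵒᵖ S) (hI : IsSmallRightIdeal I) :
    IsSmallRightIdeal (auxIU R S V I) := by
  intro K' hsup
  -- the projection of `K'` to `S`, together with `I`, is everything
  have hKS : I ⊔ auxKS R S V K' = ⊤ := by
    rw [Submodule.eq_top_iff']
    intro s
    have hmem : (inl ((0 : R), s) : TriangularRing R S V) ∈ auxIU R S V I ⊔ K' :=
      hsup ▸ Submodule.mem_top
    obtain ⟨i, hi, k, hk, hik⟩ := Submodule.mem_sup.mp hmem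
    refine Submodule.mem_sup.mpr ⟨(fst i).2, hi.2, (fst k).2, ⟨k, hk, rfl⟩, ?_⟩
    have := congrArg (fun u => (fst u).2) hik
    simpa using this
  have hKStop : auxKS R S V K' = ⊤ := hI _ hKS
  obtain ⟨k₁, hk₁, hk₁2⟩ : ∃ k₁ ∈ K', (fst k₁).2 = (1 : S) := by
    have : (1 : S) ∈ auxKS R S V K' := hKStop ▸ Submodule.mem_top
    exact this
  -- every element of `R × S` is the `fst` of some element of `K'`
  have key : ∀ p : R × S, ∃ k ∈ K', fst k = p := by
    intro p
    have hmem : (inl p : TriangularRing R S V) ∈ auxIU R S V I ⊔ K' :=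
      hsup ▸ Submodule.mem_top
    obtain ⟨i, hi, k, hk, hik⟩ := Submodule.mem_sup.mp hmem
    have hk2 : k₁ * inl ((0 : R), (fst i).2) ∈ K' :=
      K'.smul_mem (op (inl ((0 : R), (fst i).2))) hk₁
    refine ⟨k + k₁ * inl ((0 : R), (fst i).2), K'.add_mem hk hk2, ?_⟩
    have hfst := congrArg fst hik
    rw [fst_add, fst_inl] at hfst
    rw [fst_add, fst_mul, fst_inl]
    have h1 : (fst k₁ * ((0 : R), (fst i).2)) = fst i := by
      refine Prod.ext ?_ ?_
      · show (fst k₁).1 * 0 = (fst i).1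
        rw [mul_zero, hi.1]
      · show (fst k₁).2 * (fst i).2 = (fst i).2
        rw [hk₁2, one_mul]
    rw [h1, add_comm]
    exact hfst
  -- hence `auxI0 ⊔ K' = ⊤`, and smallness of `auxI0` finishes
  have h0 : auxI0 R S V ⊔ K' = ⊤ := by
    rw [Submodule.eq_top_iff']
    intro u
    obtain ⟨k, hk, hkf⟩ := key (fst u)
    refine Submodule.mem_sup.mpr ⟨u - k, ?_, k, hk, sub_add_cancel u k⟩
    rw [aux_mem_I0, fst_sub, hkf, sub_self]
  exact aux_I0_small R S V K' h0

/-- The map `[[0, v],[0, s]] ↦ [[0,0],[0, f s]]` on `auxIU I`. -/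
def auxFU (I : Submodule Sᵐᵒᵖ S) (f : I →ₗ[Sᵐᵒᵖ] S) :
    auxIU R S V I →ₗ[(TriangularRing R S V)ᵐᵒᵖ] TriangularRing R S V where
  toFun x := inl ((0 : R), f ⟨(fst x.1).2, x.2.2⟩)
  map_add' x y := by
    have h : (⟨(fst (x + y).1).2, (x + y).2.2⟩ : I)
        = ⟨(fst x.1).2, x.2.2⟩ + ⟨(fst y.1).2, y.2.2⟩ := by
      ext
      show (fst (x.1 + y.1)).2 = (fst x.1).2 + (fst y.1).2
      rw [fst_add, Prod.snd_add]
    show inl ((0 : R), f _) = inl ((0 : R), f _) + inl ((0 : R), f _)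
    rw [← inl_add, h, map_add]
    congr 1
    rw [Prod.mk_add_mk, add_zero]
  map_smul' c x := by
    have hx1 : (fst x.1).1 = 0 := x.2.1
    have h : (⟨(fst (c • x).1).2, (c • x).2.2⟩ : I)
        = op (fst c.unop).2 • ⟨(fst x.1).2, x.2.2⟩ := by
      ext
      show (fst (c • x.1)).2 = (fst x.1).2 * (fst c.unop).2
      rw [aux_op_smul, fst_mul, Prod.snd_mul]
    show inl ((0 : R), f _) = c • inl ((0 : R), f ⟨(fst x.1).2, x.2.2⟩)
    rw [h, map_smul, aux_op_smul]
    refine TrivSqZeroExt.ext ?_ ?_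
    · show ((0 : R), f ⟨(fst x.1).2, x.2.2⟩ * (fst c.unop).2)
        = ((0 : R), f ⟨(fst x.1).2, x.2.2⟩) * fst c.unop
      refine Prod.ext ?_ rfl
      show (0 : R) = 0 * (fst c.unop).1
      rw [zero_mul]
    · show (0 : V) = ((0 : R), f ⟨(fst x.1).2, x.2.2⟩) • snd c.unop
        + op (fst c.unop) • (0 : V)
      rw [aux_left_smul, smul_zero, zero_smul, zero_add]

/-- The map `[[0, v],[0, 0]] ↦ [[0,0],[0, f v]]` on `auxIK K`. -/
def auxFK (K : Submodule Sᵐᵒᵖ V) (f : K →ₗ[Sᵐᵒᵖ] S) :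
    auxIK R S V K →ₗ[(TriangularRing R S V)ᵐᵒᵖ] TriangularRing R S V where
  toFun x := inl ((0 : R), f ⟨snd x.1, x.2.2⟩)
  map_add' x y := by
    have h : (⟨snd (x + y).1, (x + y).2.2⟩ : K)
        = ⟨snd x.1, x.2.2⟩ + ⟨snd y.1, y.2.2⟩ := by
      ext
      show snd (x.1 + y.1) = snd x.1 + snd y.1
      rw [snd_add]
    show inl ((0 : R), f _) = inl ((0 : R), f _) + inl ((0 : R), f _)
    rw [← inl_add, h, map_add]
    congr 1
    rw [Prod.mk_add_mk, add_zero]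
  map_smul' c x := by
    have hx1 : fst x.1 = 0 := x.2.1
    have h : (⟨snd (c • x).1, (c • x).2.2⟩ : K)
        = op (fst c.unop).2 • ⟨snd x.1, x.2.2⟩ := by
      ext
      show snd (c • x.1) = op (fst c.unop).2 • snd x.1
      rw [aux_op_smul, snd_mul, hx1, aux_left_smul, Prod.fst_zero, zero_smul, zero_add,
        aux_right_smul, unop_op]
    show inl ((0 : R), f _) = c • inl ((0 : R), f ⟨snd x.1, x.2.2⟩)
    rw [h, map_smul, aux_op_smul]
    refine TrivSqZeroExt.ext ?_ ?_
    · show ((0 : R), f ⟨snd x.1, x.2.2⟩ * (fst c.unop).2)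
        = ((0 : R), f ⟨snd x.1, x.2.2⟩) * fst c.unop
      refine Prod.ext ?_ rfl
      show (0 : R) = 0 * (fst c.unop).1
      rw [zero_mul]
    · show (0 : V) = ((0 : R), f ⟨snd x.1, x.2.2⟩) • snd c.unop
        + op (fst c.unop) • (0 : V)
      rw [aux_left_smul, smul_zero, zero_smul, zero_add]

/-- If the formal triangular matrix ring `U = [[R, V], [0, S]]` is right small injective,
then `S` is right small injective and `Hom_S(K, S) = 0` for every right `S`-submodule `K`
of `V`. -/
theorem stmt_18 (h : SmallInjective (TriangularRing R S V) (TriangularRing R S V)) :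
    SmallInjective S S ∧
      ∀ (K : Submodule Sᵐᵒᵖ V) (f : K →ₗ[Sᵐᵒᵖ] S), f = 0 := by
  constructor
  · -- S is right small injective
    intro I hI f
    obtain ⟨G, hG⟩ := h (auxIU R S V I) (aux_IU_small R S V I hI) (auxFU R S V I f)
    set b : S := (fst (G 1)).2 with hb
    refine ⟨{ toFun := fun s => b * s
              map_add' := fun x y => mul_add b x y
              map_smul' := fun c s => (mul_assoc b s c.unop).symm }, ?_⟩
    rintro ⟨s, hs⟩
    have hmem : (inl ((0 : R), s) : TriangularRing R S V) ∈ auxIU R S V I := by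
      exact ⟨rfl, hs⟩
    have h1 : G (inl ((0 : R), s)) = G 1 * inl ((0 : R), s) := by
      have := G.map_smul (op (inl ((0 : R), s) : TriangularRing R S V)) 1
      rw [aux_op_smul, unop_op, one_mul] at this
      rw [this, aux_op_smul, unop_op]
    have h2 := hG ⟨inl ((0 : R), s), hmem⟩
    rw [h1] at h2
    have h3 := congrArg (fun u => (fst u).2) h2
    simp only [fst_mul, fst_inl, Prod.snd_mul] at h3
    show b * s = f ⟨s, hs⟩
    exact h3
  · -- Hom_S(K, S) = 0
    intro K f
    have hsmall : IsSmallRightIdeal (auxIK R S V K) := by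
      intro K' hsup
      refine aux_I0_small R S V K' ?_
      rw [eq_top_iff] at hsup ⊢
      refine le_trans hsup (sup_le_sup_right ?_ K')
      rintro u ⟨hu1, _⟩
      exact hu1
    obtain ⟨G, hG⟩ := h (auxIK R S V K) hsmall (auxFK R S V K f)
    ext ⟨v, hv⟩
    have hmem : (inr v : TriangularRing R S V) ∈ auxIK R S V K := by
      exact ⟨fst_inr _ _, by rw [snd_inr]; exact hv⟩
    have h1 : G (inr v) = G 1 * inr v := by
      have := G.map_smul (op (inr v : TriangularRing R S V)) 1
      rw [aux_op_smul, unop_op, one_mul] at this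
      rw [this, aux_op_smul, unop_op]
    have h2 := hG ⟨inr v, hmem⟩
    rw [h1] at h2
    have h3 := congrArg (fun u => (fst u).2) h2
    simp only [fst_mul, fst_inr, fst_inl, mul_zero, Prod.snd_mul, Prod.snd_zero] at h3
    show f ⟨v, hv⟩ = 0
    have : f ⟨snd (inr v : TriangularRing R S V), hmem.2⟩ = 0 := h3.symm
    simpa using this

end Triangular
end

section
/- For any nonzero ring R and any n ≥ 2, the upper triangular matrix ring T_n(R) is not right small injective. -/
/-- The ring `T_n(R)` of `n × n` upper triangular matrices over `R`, as a subring of the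
matrix ring. -/
def upperTriangular (n : ℕ) (R : Type*) [Ring R] : Subring (Matrix (Fin n) (Fin n) R) where
  carrier := {M | ∀ i j, j < i → M i j = 0}
  zero_mem' := fun _ _ _ => rfl
  one_mem' := fun i j hij => Matrix.one_apply_ne (ne_of_lt hij).symm
  add_mem' := by
    intro A B hA hB i j hij
    show A i j + B i j = 0
    rw [hA i j hij, hB i j hij, add_zero]
  neg_mem' := by
    intro A hA i j hij
    show -A i j = 0
    rw [hA i j hij, neg_zero]
  mul_mem' := by
    intro A B hA hB i j hij
    show (A * B) i j = 0
    rw [Matrix.mul_apply]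
    refine Finset.sum_eq_zero fun k _ => ?_
    rcases lt_or_ge j k with hk | hk
    · rw [hB k j hk, mul_zero]
    · rw [hA i k (lt_of_le_of_lt hk hij), zero_mul]

/-!
Since `e₁ₙ s e₁ₙ = 0` for every upper triangular `s`, each element of the right ideal `e₁ₙ T_n(R)`
squares to zero, so the ideal lies in the Jacobson radical and is small. Left multiplication by
the lower triangular matrix `eₙ₁` maps `e₁ₙ T_n(R)` into `T_n(R)`, sending `e₁ₙ` to `eₙₙ`, and
is right linear. If it were left multiplication by some `c ∈ T_n(R)`, then `eₙₙ = c e₁ₙ`, whose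
`(n, n)` entry is `c_{n1} = 0`.
-/

open Matrix

section SmallRightIdeal

variable {S : Type*} [Ring S]

theorem isSmallRightIdeal_of_forall_isUnit_one_sub {I : Submodule Sᵐᵒᵖ S}
    (h : ∀ a ∈ I, IsUnit (1 - a)) : IsSmallRightIdeal I := by
  intro K hK
  obtain ⟨a, ha, b, hb, hab⟩ := Submodule.mem_sup.mp (hK ▸ Submodule.mem_top : (1 : S) ∈ I ⊔ K)
  obtain ⟨u, hu⟩ := h a ha
  have hbu : b * ↑u⁻¹ = 1 := by
    rw [show b = 1 - a by rw [← hab]; abel, ← hu, Units.mul_inv]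
  have h1 : (1 : S) ∈ K := hbu ▸ K.smul_mem (MulOpposite.op ↑u⁻¹) hb
  refine Submodule.eq_top_iff'.mpr fun x => ?_
  simpa using K.smul_mem (MulOpposite.op x) h1

theorem isSmallRightIdeal_span_singleton_of_mul_mul_eq_zero {e : S} (he : ∀ s, e * s * e = 0) :
    IsSmallRightIdeal (Submodule.span Sᵐᵒᵖ {e}) := by
  refine isSmallRightIdeal_of_forall_isUnit_one_sub fun a ha => IsNilpotent.isUnit_one_sub ?_
  obtain ⟨s, rfl⟩ := Submodule.mem_span_singleton.mp ha
  refine ⟨2, ?_⟩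
  simp only [MulOpposite.smul_eq_mul_unop, pow_two, ← mul_assoc, he, zero_mul]

theorem LinearMap.apply_eq_apply_one_mul (g : S →ₗ[Sᵐᵒᵖ] S) (x : S) : g x = g 1 * x := by
  simpa using g.map_smul (MulOpposite.op x) 1

theorem SmallInjective.exists_mul_eq (hS : SmallInjective S S) {I : Submodule Sᵐᵒᵖ S}
    (hI : IsSmallRightIdeal I) (f : I →ₗ[Sᵐᵒᵖ] S) : ∃ c : S, ∀ x : I, c * x = f x := by
  obtain ⟨g, hg⟩ := hS I hI f
  exact ⟨g 1, fun x => by rw [← hg, g.apply_eq_apply_one_mul x]⟩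

end SmallRightIdeal

section Subring

variable {A : Type*} [Ring A] (S : Subring A)

def Subring.mulLeftOfMulMem (a : A) (I : Submodule Sᵐᵒᵖ S) (h : ∀ x ∈ I, a * x ∈ S) :
    I →ₗ[Sᵐᵒᵖ] S where
  toFun x := ⟨a * x, h x x.2⟩
  map_add' x y := Subtype.ext (mul_add a x y)
  map_smul' m x := Subtype.ext (mul_assoc a x (m.unop : S)).symm

theorem SmallInjective.exists_mul_eq_mul_of_mul_mem (hS : SmallInjective S S) {e : S}
    (he : IsSmallRightIdeal (Submodule.span Sᵐᵒᵖ {e})) {a : A} (hae : a * e ∈ S) :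
    ∃ c : S, (c : A) * e = a * e := by
  have hmem : ∀ x ∈ Submodule.span Sᵐᵒᵖ {e}, a * x ∈ S := by
    intro x hx
    obtain ⟨s, rfl⟩ := Submodule.mem_span_singleton.mp hx
    simpa [← mul_assoc] using S.mul_mem hae s.unop.2
  obtain ⟨c, hc⟩ := hS.exists_mul_eq he (S.mulLeftOfMulMem a _ hmem)
  exact ⟨c, congrArg Subtype.val (hc ⟨e, Submodule.mem_span_singleton_self e⟩)⟩

end Subring

section UpperTriangular

variable {n : ℕ} {R : Type*} [Ring R]

theorem single_mem_upperTriangular {i j : Fin n} (hij : i ≤ j) (c : R) :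
    single i j c ∈ upperTriangular n R := by
  intro a b hba
  rw [single_apply_of_ne]
  rintro ⟨rfl, rfl⟩
  exact hba.not_ge hij

theorem not_smallInjective_upperTriangular_of_lt [Nontrivial R] {i j : Fin n} (hij : i < j) :
    ¬ SmallInjective (upperTriangular n R) (upperTriangular n R) := by
  intro hS
  let e : upperTriangular n R := ⟨single i j 1, single_mem_upperTriangular hij.le 1⟩
  have hsmall : IsSmallRightIdeal (Submodule.span (upperTriangular n R)ᵐᵒᵖ {e}) :=
    isSmallRightIdeal_span_singleton_of_mul_mul_eq_zero fun s => Subtype.ext <| by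
      simp [e, single_mul_mul_single, s.2 j i hij]
  have hae : single j i (1 : R) * e ∈ upperTriangular n R := by
    simpa [e] using single_mem_upperTriangular le_rfl (1 : R)
  obtain ⟨c, hc⟩ := hS.exists_mul_eq_mul_of_mul_mem _ hsmall hae
  have hjj := congrFun (congrFun hc j) j
  simp [e, c.2 j i hij] at hjj

end UpperTriangular

/-- For any nonzero ring `R` and any `n ≥ 2`, the upper triangular matrix ring `T_n(R)`
is not right small injective. -/
theorem stmt_19 (R : Type*) [Ring R] [Nontrivial R] (n : ℕ) (hn : 2 ≤ n) :
    ¬ SmallInjective (upperTriangular n R) (upperTriangular n R) :=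
  not_smallInjective_upperTriangular_of_lt (i := ⟨0, by omega⟩) (j := ⟨1, by omega⟩)
    (Fin.mk_lt_mk.mpr one_pos)
end
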